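/- Let B be a commutative ring. The map σ_B : Idem(B) → GL₂(B) sending an idempotent b to the matrix with rows (b, 1−b) and (1−b, b) is a group homomorphism from the idempotent group (with law e ∗ f = e·f + (1−e)·(1−f)) into GL₂(B), it lands in the normalizer subgroup N(B), and it is a section of the homomorphism π_B(g) = g11·g22/det(g); consequently N(B) is isomorphic to the semidirect product T(B) ⋊ Idem(B). -/
import Mathlib


section

variable {B : Type} [CommRing B]

/-- The section `σ_B` sending an idempotent `b` to the matrix `[[b, 1−b],[1−b, b]]`. -/
def sigmaN (b : B) : Matrix (Fin 2) (Fin 2) B := !![b, 1 - b; 1 - b, b]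

/-- The entry conditions defining the schematic normalizer `N(B)`. -/
def inNormalizerM (m : Matrix (Fin 2) (Fin 2) B) : Prop :=
  m 0 0 * m 0 1 = 0 ∧ m 1 0 * m 1 1 = 0 ∧ m 0 0 * m 1 0 = 0 ∧ m 0 1 * m 1 1 = 0

/-- The map `π_B(g) = g11·g22/det(g)`. -/
noncomputable def piNM (m : Matrix (Fin 2) (Fin 2) B) : B :=
  m 0 0 * m 1 1 * Ring.inverse m.det

lemma sigma_invol (b : B) (hb : IsIdempotentElem b) : sigmaN b * sigmaN b = 1 := by
  have h := hb
  unfold IsIdempotentElem at h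
  ext i j
  fin_cases i <;> fin_cases j <;>
    simp [sigmaN, Matrix.mul_apply, Fin.sum_univ_two, Matrix.one_apply] <;>
    first | linear_combination (-2 : B) * h | linear_combination (2 : B) * h

end

/-- `σ_B(b) = [[b,1−b],[1−b,b]]` is invertible (indeed an involution), lands
in the normalizer `N(B)`, is a group homomorphism from the idempotent group
(`e ∗ f = ef + (1−e)(1−f)`) to `GL₂(B)`, and is a section of `π_B`; consequently every
element of `N(B)` factors uniquely as `t · σ_B(π_B(n))` with `t` in the diagonal torus,
i.e. `N(B) ≅ T(B) ⋊ Idem(B)`. -/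
theorem sigma_section_semidirect (B : Type) [CommRing B] :
    (∀ b : B, IsIdempotentElem b →
      sigmaN b * sigmaN b = 1 ∧ inNormalizerM (sigmaN b) ∧ piNM (sigmaN b) = b) ∧
    (∀ e f : B, IsIdempotentElem e → IsIdempotentElem f →
      sigmaN (e * f + (1 - e) * (1 - f)) = sigmaN e * sigmaN f) ∧
    (∀ m : Matrix (Fin 2) (Fin 2) B, IsUnit m.det → inNormalizerM m →
      ∃! t : Matrix (Fin 2) (Fin 2) B,
        (t 0 1 = 0 ∧ t 1 0 = 0 ∧ IsUnit t.det) ∧ m = t * sigmaN (piNM m)) := by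
  refine ⟨?_, ?_, ?_⟩
  · intro b hb
    have h : b * b = b := hb
    refine ⟨sigma_invol b hb, ⟨?_, ?_, ?_, ?_⟩, ?_⟩
    · simp [sigmaN]; linear_combination -h
    · simp [sigmaN]; linear_combination -h
    · simp [sigmaN]; linear_combination -h
    · simp [sigmaN]; linear_combination -h
    · have hdet : (sigmaN b).det = 2 * b - 1 := by
        simp [sigmaN, Matrix.det_fin_two]; ring_nf
      have hu : (2 * b - 1) * (2 * b - 1) = 1 := by linear_combination (4:B) * h
      have hinv : Ring.inverse (2 * b - 1) = 2 * b - 1 := by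
        have : Ring.inverse ((⟨2*b-1, 2*b-1, hu, hu⟩ : Bˣ) : B) = ((⟨2*b-1, 2*b-1, hu, hu⟩ : Bˣ)⁻¹ : Bˣ) :=
          Ring.inverse_unit _
        simpa using this
      have hp : piNM (sigmaN b) = b * b * (2*b-1) := by
        rw [piNM, hdet, hinv]; simp [sigmaN]
      rw [hp]; linear_combination (2*b + 1) * h
  · intro e f _ _
    ext i j
    fin_cases i <;> fin_cases j <;>
      simp [sigmaN, Matrix.mul_apply, Fin.sum_univ_two] <;> ring
  · intro m hdet hN
    obtain ⟨h1, h2, h3, h4⟩ := hN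
    obtain ⟨u, hu⟩ := hdet
    have hinv : Ring.inverse m.det = (↑u⁻¹ : B) := by rw [← hu, Ring.inverse_unit]
    set v : B := (↑u⁻¹ : B) with hv
    have hvd : v * m.det = 1 := by rw [← hu]; exact u.inv_mul
    have hd : m.det = m 0 0 * m 1 1 - m 0 1 * m 1 0 := Matrix.det_fin_two m
    rw [hd] at hvd
    set b : B := piNM m with hb
    have hbe : b = m 0 0 * m 1 1 * v := by rw [hb, piNM, hinv]
    have hidem : IsIdempotentElem b := by
      unfold IsIdempotentElem
      rw [hbe]
      linear_combination (m 0 0 * m 1 1 * v) * hvd + (v^2 * m 1 0 * m 1 1 * m 0 0 * m 1 1 + v^2*m 1 0*m 1 1 - m 0 0 * m 1 1^2 * v^2 * m 1 0) * h1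
    have hσ : sigmaN b * sigmaN b = 1 := sigma_invol b hidem
    have hdσ : (sigmaN b).det = 2 * b - 1 := by
      simp [sigmaN, Matrix.det_fin_two]; ring
    have hu2 : (2 * b - 1) * (2 * b - 1) = 1 := by
      have h := hidem; unfold IsIdempotentElem at h; linear_combination (4:B) * h
    refine ⟨m * sigmaN b, ⟨⟨?_, ?_, ?_⟩, ?_⟩, ?_⟩
    · simp [sigmaN, Matrix.mul_apply, Fin.sum_univ_two, hbe]
      linear_combination (-(m 0 0))*hvd + (m 1 1 * v - m 1 0 * v)*h1
    · simp [sigmaN, Matrix.mul_apply, Fin.sum_univ_two, hbe]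
      linear_combination (-(m 1 1))*hvd + (m 1 1 * v)*h3 + (-(v*m 0 1))*h2
    · rw [Matrix.det_mul, hdσ]
      exact IsUnit.mul ⟨u, hu⟩ ⟨⟨2*b-1, 2*b-1, hu2, hu2⟩, rfl⟩
    · rw [Matrix.mul_assoc, hσ, Matrix.mul_one]
    · rintro t' ⟨-, ht'⟩
      rw [ht', Matrix.mul_assoc, hσ, Matrix.mul_one]
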